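/- arXiv:1210.1690 — 3 statements merged into one kernel-verified Lean document; each statement's English description precedes it below -/
import Mathlib

section
/- For every ν > 0, λ ≠ 0 and t > 0, the space-time convolution of the constant function 1 with the kernel K satisfies (1 ⋆ K)(t,x) = 2 exp(λ⁴ t/(4ν)) Φ(λ²√(t/(2ν))) − 1 for all x ∈ ℝ; i.e., ∫_0^t ∫_ℝ K(s, y; ν, λ) dy ds = H(t; ν, λ) where H(t; ν, λ) := 2 e^{λ⁴ t/(4ν)} Φ(λ²√(t/(2ν))) − 1. -/
open MeasureTheory Real Set Filter

/-- Standard normal CDF. -/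
noncomputable def Phi (x : ℝ) : ℝ := ∫ y in Set.Iic x, Real.exp (-y^2/2) / Real.sqrt (2*Real.pi)

/-- Error function. -/
noncomputable def erf (x : ℝ) : ℝ := (2 / Real.sqrt Real.pi) * ∫ y in (0:ℝ)..x, Real.exp (-y^2)

/-- Complementary error function. -/
noncomputable def erfc (x : ℝ) : ℝ := 1 - erf x

/-- One-dimensional heat kernel with diffusion parameter ν. -/
noncomputable def G (ν t x : ℝ) : ℝ := (Real.sqrt (2*Real.pi*ν*t))⁻¹ * Real.exp (-x^2/(2*ν*t))

/-- The kernel K(t,x;ν,λ). -/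
noncomputable def K (ν lam t x : ℝ) : ℝ :=
  G (ν/2) t x * (lam^2 / Real.sqrt (4*Real.pi*ν*t)
    + lam^4/(2*ν) * Real.exp (lam^4*t/(4*ν)) * Phi (lam^2 * Real.sqrt (t/(2*ν))))

/-- The function H(t;ν,λ). -/
noncomputable def Hfun (ν lam t : ℝ) : ℝ :=
  2 * Real.exp (lam^4*t/(4*ν)) * Phi (lam^2 * Real.sqrt (t/(2*ν))) - 1

/-! Each `K(s,·)` is the heat kernel `G_{ν/2}(s,·)`, which has unit mass, times a factor `k(s)`
depending on time only, so the double integral is `∫₀ᵗ k`. With `c = λ²/√(2ν)` one has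
`H(t) = 2 e^{c²t/2} Φ(c√t) - 1`; in its derivative the Gaussian density cancels the exponential,
`e^{c²t/2} Φ'(c√t) = 1/√(2π)`, which leaves exactly `k(t)`. As `H(0) = 2Φ(0) - 1 = 0` and `k` has
only an integrable `s^{-1/2}` singularity at `0`, the fundamental theorem of calculus gives
`∫₀ᵗ k = H(t)`. -/

open ProbabilityTheory

theorem hasDerivAt_integral_Iic {f : ℝ → ℝ} (hf : Continuous f) (hfi : Integrable f) (x : ℝ) :
    HasDerivAt (fun u => ∫ y in Iic u, f y) (f x) x := by
  have hsplit : (fun u => ∫ y in Iic u, f y) =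
      fun u => (∫ y in Iic 0, f y) + ∫ y in (0 : ℝ)..u, f y := by
    funext u
    rw [← intervalIntegral.integral_Iic_sub_Iic hfi.integrableOn hfi.integrableOn]
    ring
  rw [hsplit]
  exact (hf.integral_hasStrictDerivAt 0 x).hasDerivAt.const_add _

theorem integral_Iic_zero_of_even {f : ℝ → ℝ} (heven : ∀ x, f (-x) = f x) (hfi : Integrable f) :
    ∫ y in Iic 0, f y = (∫ y, f y) / 2 := by
  have hsym : ∫ y in Iic (0 : ℝ), f y = ∫ y in Ioi (0 : ℝ), f y := by
    simpa [heven] using integral_comp_neg_Iic 0 f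
  rw [← intervalIntegral.integral_Iic_add_Ioi hfi.integrableOn hfi.integrableOn, ← hsym]
  ring

theorem continuous_gaussianPDFReal (μ : ℝ) (v : NNReal) : Continuous (gaussianPDFReal μ v) := by
  unfold gaussianPDFReal
  fun_prop

theorem Phi_eq_integral_gaussianPDFReal (x : ℝ) :
    Phi x = ∫ y in Iic x, gaussianPDFReal 0 1 y := by
  unfold Phi
  congr with y
  simp [gaussianPDFReal, div_eq_inv_mul]

theorem hasDerivAt_Phi (x : ℝ) : HasDerivAt Phi (gaussianPDFReal 0 1 x) x := by
  rw [funext Phi_eq_integral_gaussianPDFReal]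
  exact hasDerivAt_integral_Iic (continuous_gaussianPDFReal 0 1) (integrable_gaussianPDFReal 0 1) x

theorem continuous_Phi : Continuous Phi :=
  continuous_iff_continuousAt.2 fun x => (hasDerivAt_Phi x).continuousAt

theorem Phi_zero : Phi 0 = 1 / 2 := by
  rw [Phi_eq_integral_gaussianPDFReal,
    integral_Iic_zero_of_even (fun x => by simp [gaussianPDFReal]) (integrable_gaussianPDFReal 0 1),
    integral_gaussianPDFReal_eq_one 0 one_ne_zero]

theorem G_eq_gaussianPDFReal {ν t : ℝ} (h : 0 ≤ ν * t) (x : ℝ) :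
    G ν t x = gaussianPDFReal 0 ⟨ν * t, h⟩ x := by
  simp only [G, gaussianPDFReal, sub_zero, mul_assoc]
  rfl

theorem integral_G {ν t : ℝ} (h : 0 < ν * t) : ∫ x, G ν t x = 1 := by
  simp_rw [G_eq_gaussianPDFReal h.le]
  exact integral_gaussianPDFReal_eq_one 0 fun h0 => h.ne' (congrArg NNReal.toReal h0)

noncomputable def Hprofile (c t : ℝ) : ℝ := 2 * exp (c ^ 2 * t / 2) * Phi (c * √t) - 1

noncomputable def kprofile (c t : ℝ) : ℝ :=
  c / √(2 * π * t) + c ^ 2 * exp (c ^ 2 * t / 2) * Phi (c * √t)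

theorem Hprofile_zero (c : ℝ) : Hprofile c 0 = 0 := by
  simp [Hprofile, Phi_zero]

theorem continuous_Hprofile (c : ℝ) : Continuous (Hprofile c) := by
  have := continuous_Phi
  unfold Hprofile
  fun_prop

theorem exp_mul_gaussianPDFReal_mul_sqrt (c : ℝ) {t : ℝ} (ht : 0 ≤ t) :
    exp (c ^ 2 * t / 2) * gaussianPDFReal 0 1 (c * √t) = (√(2 * π))⁻¹ := by
  simp only [gaussianPDFReal, NNReal.coe_one, mul_one, sub_zero, mul_pow, sq_sqrt ht]
  rw [mul_left_comm, ← exp_add, show c ^ 2 * t / 2 + -(c ^ 2 * t) / 2 = 0 by ring, exp_zero, mul_one]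

theorem hasDerivAt_Hprofile (c : ℝ) {t : ℝ} (ht : 0 < t) :
    HasDerivAt (Hprofile c) (kprofile c t) t := by
  have hexp : HasDerivAt (fun s => exp (c ^ 2 * s / 2)) (exp (c ^ 2 * t / 2) * (c ^ 2 / 2)) t := by
    simpa using ((hasDerivAt_id t).const_mul (c ^ 2)).div_const 2 |>.exp
  have harg : HasDerivAt (fun s => c * √s) (c * (1 / (2 * √t))) t :=
    (hasDerivAt_sqrt ht.ne').const_mul c
  have hfun : Hprofile c = fun s => 2 * (exp (c ^ 2 * s / 2) * Phi (c * √s)) - 1 := by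
    funext s
    simp only [Hprofile]
    ring
  rw [hfun]
  refine (((hexp.mul ((hasDerivAt_Phi _).comp t harg)).const_mul 2).sub_const 1).congr_deriv ?_
  have hdensity := exp_mul_gaussianPDFReal_mul_sqrt c ht.le
  have hsqrt : √(2 * π * t) = √(2 * π) * √t := sqrt_mul (by positivity) t
  simp only [kprofile, hsqrt, Function.comp_apply]
  rw [← mul_assoc (exp _), hdensity]
  field_simp
  ring

theorem intervalIntegrable_kprofile (c : ℝ) {t : ℝ} (ht : 0 ≤ t) :
    IntervalIntegrable (kprofile c) volume 0 t := by
  have hsing : IntervalIntegrable (fun s : ℝ => c / √(2 * π * s)) volume 0 t := by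
    have hrpow : IntervalIntegrable (fun s : ℝ => c / √(2 * π) * s ^ (-(1 / 2) : ℝ)) volume 0 t :=
      (intervalIntegral.intervalIntegrable_rpow' (by norm_num)).const_mul _
    rw [intervalIntegrable_iff_integrableOn_Ioc_of_le ht] at hrpow ⊢
    refine hrpow.congr_fun (fun s hs => ?_) measurableSet_Ioc
    dsimp only
    rw [sqrt_mul (by positivity : (0 : ℝ) ≤ 2 * π) s, rpow_neg hs.1.le, ← sqrt_eq_rpow]
    ring
  have hsmooth : Continuous fun s => c ^ 2 * exp (c ^ 2 * s / 2) * Phi (c * √s) := by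
    have := continuous_Phi
    fun_prop
  exact hsing.add (hsmooth.intervalIntegrable 0 t)

theorem integral_kprofile (c : ℝ) {t : ℝ} (ht : 0 ≤ t) :
    ∫ s in (0 : ℝ)..t, kprofile c s = Hprofile c t := by
  rw [intervalIntegral.integral_eq_sub_of_hasDerivAt_of_le ht (continuous_Hprofile c).continuousOn
    (fun s hs => hasDerivAt_Hprofile c hs.1) (intervalIntegrable_kprofile c ht),
    Hprofile_zero, sub_zero]

theorem pow_four_mul_div_eq {ν : ℝ} (hν : 0 < ν) (lam t : ℝ) :
    lam ^ 4 * t / (4 * ν) = (lam ^ 2 / √(2 * ν)) ^ 2 * t / 2 := by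
  rw [div_pow, sq_sqrt (by positivity)]
  field_simp
  ring

theorem sq_mul_sqrt_div_eq {ν : ℝ} (hν : 0 ≤ ν) (lam t : ℝ) :
    lam ^ 2 * √(t / (2 * ν)) = lam ^ 2 / √(2 * ν) * √t := by
  rw [sqrt_div' t (by positivity)]
  ring

theorem Hfun_eq_Hprofile {ν : ℝ} (hν : 0 < ν) (lam t : ℝ) :
    Hfun ν lam t = Hprofile (lam ^ 2 / √(2 * ν)) t := by
  rw [Hfun, Hprofile, pow_four_mul_div_eq hν, sq_mul_sqrt_div_eq hν.le]

theorem K_eq_G_mul_kprofile {ν : ℝ} (hν : 0 < ν) (lam t x : ℝ) :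
    K ν lam t x = G (ν / 2) t x * kprofile (lam ^ 2 / √(2 * ν)) t := by
  have hsqrt : √(4 * π * ν * t) = √(2 * ν) * √(2 * π * t) := by
    rw [← sqrt_mul (by positivity)]
    ring_nf
  rw [K, kprofile, hsqrt, pow_four_mul_div_eq hν, sq_mul_sqrt_div_eq hν.le, div_pow,
    sq_sqrt (by positivity)]
  ring

theorem one_star_K_eq_H_general (ν lam t : ℝ) (hν : 0 < ν) (ht : 0 < t) :
    ∫ s in (0:ℝ)..t, ∫ y : ℝ, K ν lam s y = Hfun ν lam t := by
  have hinner : ∀ s ∈ Ioc 0 t, ∫ y, K ν lam s y = kprofile (lam ^ 2 / √(2 * ν)) s := by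
    intro s hs
    simp_rw [K_eq_G_mul_kprofile hν, integral_mul_const, integral_G (mul_pos (half_pos hν) hs.1),
      one_mul]
  calc ∫ s in (0:ℝ)..t, ∫ y, K ν lam s y = ∫ s in (0:ℝ)..t, kprofile (lam ^ 2 / √(2 * ν)) s :=
        intervalIntegral.integral_congr_ae
          (ae_of_all _ fun s hs => hinner s (uIoc_of_le ht.le ▸ hs))
    _ = Hfun ν lam t := by rw [integral_kprofile _ ht.le, Hfun_eq_Hprofile hν]

theorem one_star_K_eq_H (ν lam t : ℝ) (hν : 0 < ν) (hlam : lam ≠ 0) (ht : 0 < t) (x : ℝ) :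
    ∫ s in (0:ℝ)..t, ∫ y : ℝ, K ν lam s y = Hfun ν lam t :=
  one_star_K_eq_H_general ν lam t hν ht
end

section
/- Let μ be a bounded α-Hölder continuous function on ℝ with α ∈ (0,1], and define J₀(t,x) := ∫_ℝ G_ν(t, x−y) μ(y) dy for t > 0 and J₀(0,x) := μ(x). Then there is a constant C such that |J₀(t,x) − J₀(s,x)| ≤ C|t − s|^{α/2} and |J₀(t,x) − J₀(t,y)| ≤ C|x − y|^{α} for all s, t ≥ 0 and x, y ∈ ℝ; in particular J₀ is jointly continuous on [0,∞) × ℝ, Hölder of exponent α/2 in time and α in space. -/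
open MeasureTheory Real Set Filter

/-!
After the substitution `y = x - √(νt) z`, `J₀(t, x) = 𝔼[μ(x - √(νt) Z)]` for a standard normal `Z`,
and this also holds at `t = 0`. The Hölder bound for `μ` and subadditivity of `r ↦ r ^ α` give
`|J₀(t, x) - J₀(s, y)| ≤ C (|x - y| ^ α + 𝔼|Z| ^ α · |√(νt) - √(νs)| ^ α)`, and
`|√a - √b| ≤ √|a - b|` turns the last factor into `ν ^ (α/2) |t - s| ^ (α/2)`.
Joint continuity follows from the same estimate.
-/

open ProbabilityTheory

lemma abs_sqrt_sub_sqrt_le {a b : ℝ} (ha : 0 ≤ a) (hb : 0 ≤ b) : |√a - √b| ≤ √|a - b| := by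
  rw [le_sqrt (abs_nonneg _) (abs_nonneg _), sq_abs]
  rcases le_total b a with hba | hab
  · rw [abs_of_nonneg (sub_nonneg.2 hba)]
    nlinarith [sq_sqrt ha, sq_sqrt hb, sqrt_nonneg b, sqrt_le_sqrt hba]
  · rw [abs_of_nonpos (sub_nonpos.2 hab)]
    nlinarith [sq_sqrt ha, sq_sqrt hb, sqrt_nonneg a, sqrt_le_sqrt hab]

lemma abs_sqrt_mul_sub_sqrt_mul_rpow_le {ν s t α : ℝ} (hν : 0 ≤ ν) (hs : 0 ≤ s) (ht : 0 ≤ t)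
    (hα : 0 ≤ α) : |√(ν * t) - √(ν * s)| ^ α ≤ ν ^ (α / 2) * |t - s| ^ (α / 2) := calc
  _ ≤ √|ν * t - ν * s| ^ α :=
      rpow_le_rpow (abs_nonneg _) (abs_sqrt_sub_sqrt_le (by positivity) (by positivity)) hα
  _ = (ν * |t - s|) ^ (α / 2) := by
      rw [← mul_sub, abs_mul, abs_of_nonneg hν, sqrt_eq_rpow, ← rpow_mul (by positivity)]
      ring_nf
  _ = ν ^ (α / 2) * |t - s| ^ (α / 2) := mul_rpow hν (abs_nonneg _)

lemma continuousAt_of_dist_le {X Y : Type*} [TopologicalSpace X] [PseudoMetricSpace Y]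
    {f : X → Y} {g : X → ℝ} {x : X} (hg : ContinuousAt g x) (hgx : g x = 0)
    (h : ∀ y, dist (f y) (f x) ≤ g y) : ContinuousAt f x :=
  tendsto_iff_dist_tendsto_zero.2 <|
    squeeze_zero (fun _ => dist_nonneg) h (hgx ▸ hg)

lemma heatKernel_eq_gaussianPDFReal {ν t : ℝ} (hνt : 0 ≤ ν * t) :
    G ν t = gaussianPDFReal 0 (ν * t).toNNReal := by
  ext x
  simp only [G, gaussianPDFReal, coe_toNNReal _ hνt, sub_zero, mul_assoc]

lemma gaussianReal_toNNReal_eq_map_const_mul {v : ℝ} (hv : 0 ≤ v) :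
    gaussianReal 0 v.toNNReal = (gaussianReal 0 1).map (√v * ·) := by
  rw [gaussianReal_map_const_mul, mul_zero, mul_one]
  congr
  ext
  simp [sq_sqrt hv, hv]

noncomputable def gaussianSmoothing (f : ℝ → ℝ) (c x : ℝ) : ℝ :=
  ∫ z, f (x - c * z) ∂gaussianReal 0 1

@[simp]
lemma gaussianSmoothing_zero_left (f : ℝ → ℝ) (x : ℝ) : gaussianSmoothing f 0 x = f x := by
  simp [gaussianSmoothing]

lemma integral_heatKernel_mul_eq_gaussianSmoothing {ν t : ℝ} (hν : 0 < ν) (ht : 0 < t)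
    (f : ℝ → ℝ) (x : ℝ) :
    ∫ y, G ν t (x - y) * f y = gaussianSmoothing f √(ν * t) x := by
  have hνt : 0 < ν * t := mul_pos hν ht
  have hc : √(ν * t) ≠ 0 := (sqrt_pos.2 hνt).ne'
  calc ∫ y, G ν t (x - y) * f y
      = ∫ y, gaussianPDFReal 0 (ν * t).toNNReal y • f (x - y) := by
        rw [← heatKernel_eq_gaussianPDFReal hνt.le]
        simpa using integral_sub_left_eq_self (fun y => G ν t y * f (x - y)) volume x
    _ = ∫ y, f (x - y) ∂gaussianReal 0 (ν * t).toNNReal :=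
        (integral_gaussianReal_eq_integral_smul (by simpa using hνt)).symm
    _ = gaussianSmoothing f √(ν * t) x := by
        rw [gaussianReal_toNNReal_eq_map_const_mul hνt.le,
          (measurableEmbedding_mulLeft₀ hc).integral_map]
        rfl

lemma integrable_abs_rpow_gaussianReal {α : ℝ} (hα : 0 ≤ α) :
    Integrable (fun z : ℝ => |z| ^ α) (gaussianReal 0 1) := by
  simpa [coe_toNNReal _ hα] using
    (memLp_id_gaussianReal (μ := 0) (v := 1) α.toNNReal).integrable_norm_rpow'

section HolderContinuous

variable {f : ℝ → ℝ} {C α : ℝ}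

lemma nonneg_of_abs_sub_le_mul_rpow (hf : ∀ x y, |f x - f y| ≤ C * |x - y| ^ α) : 0 ≤ C := by
  simpa using (abs_nonneg _).trans (hf 1 0)

lemma continuous_of_abs_sub_le_mul_rpow (hα : 0 < α)
    (hf : ∀ x y, |f x - f y| ≤ C * |x - y| ^ α) : Continuous f :=
  continuous_iff_continuousAt.2 fun x =>
    continuousAt_of_dist_le (by fun_prop (disch := exact Or.inr hα.le)) (by simp [hα.ne'])
      fun y => hf y x

lemma integrable_comp_sub_mul_gaussianReal (hα0 : 0 < α)
    (hf : ∀ x y, |f x - f y| ≤ C * |x - y| ^ α) (c x : ℝ) :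
    Integrable (fun z => f (x - c * z)) (gaussianReal 0 1) := by
  have hmeas : Continuous fun z => f (x - c * z) :=
    (continuous_of_abs_sub_le_mul_rpow hα0 hf).comp (by fun_prop)
  refine Integrable.mono' (((integrable_abs_rpow_gaussianReal hα0.le).const_mul
    (C * |c| ^ α)).add (integrable_const |f x|)) hmeas.aestronglyMeasurable
    (ae_of_all _ fun z => ?_)
  calc ‖f (x - c * z)‖ ≤ |f (x - c * z) - f x| + |f x| := by
        simpa using abs_sub_abs_le_abs_sub (f (x - c * z)) (f x)
    _ ≤ C * |c * z| ^ α + |f x| := by simpa using add_le_add_right (hf (x - c * z) x) |f x|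
    _ = C * |c| ^ α * |z| ^ α + |f x| := by
        rw [abs_mul, mul_rpow (abs_nonneg _) (abs_nonneg _), mul_assoc]

lemma abs_gaussianSmoothing_sub_le (hα0 : 0 < α) (hα1 : α ≤ 1)
    (hf : ∀ x y, |f x - f y| ≤ C * |x - y| ^ α) (c d a b : ℝ) :
    |gaussianSmoothing f c a - gaussianSmoothing f d b|
      ≤ C * |a - b| ^ α + C * (∫ z, |z| ^ α ∂gaussianReal 0 1) * |c - d| ^ α := by
  have hC := nonneg_of_abs_sub_le_mul_rpow hf
  have hpointwise : ∀ z, |f (a - c * z) - f (b - d * z)|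
      ≤ C * |a - b| ^ α + C * |c - d| ^ α * |z| ^ α := fun z => calc
    _ ≤ C * |(a - b) + (d - c) * z| ^ α := by
        rw [show (a - b) + (d - c) * z = a - c * z - (b - d * z) by ring]; exact hf _ _
    _ ≤ C * (|a - b| + |d - c| * |z|) ^ α := by
        gcongr
        exact (abs_add_le _ _).trans_eq (by rw [abs_mul])
    _ ≤ C * (|a - b| ^ α + (|d - c| * |z|) ^ α) := by
        gcongr; exact rpow_add_le_add_rpow (by positivity) (by positivity) hα0.le hα1
    _ = C * |a - b| ^ α + C * |c - d| ^ α * |z| ^ α := by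
        rw [mul_rpow (abs_nonneg _) (abs_nonneg _), abs_sub_comm d c]; ring
  have hint := integrable_abs_rpow_gaussianReal hα0.le
  calc |gaussianSmoothing f c a - gaussianSmoothing f d b|
      = |∫ z, (f (a - c * z) - f (b - d * z)) ∂gaussianReal 0 1| := by
        rw [gaussianSmoothing, gaussianSmoothing, integral_sub
          (integrable_comp_sub_mul_gaussianReal hα0 hf c a)
          (integrable_comp_sub_mul_gaussianReal hα0 hf d b)]
    _ ≤ ∫ z, (C * |a - b| ^ α + C * |c - d| ^ α * |z| ^ α) ∂gaussianReal 0 1 := by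
        refine norm_integral_le_of_norm_le
          (f := fun z => f (a - c * z) - f (b - d * z)) ?_ (ae_of_all _ hpointwise)
        exact (integrable_const _).add (hint.const_mul _)
    _ = C * |a - b| ^ α + C * (∫ z, |z| ^ α ∂gaussianReal 0 1) * |c - d| ^ α := by
        rw [integral_add (integrable_const _) (hint.const_mul _), integral_const,
          integral_const_mul, probReal_univ, one_smul]
        ring

lemma continuous_gaussianSmoothing (hα0 : 0 < α) (hα1 : α ≤ 1)
    (hf : ∀ x y, |f x - f y| ≤ C * |x - y| ^ α) :
    Continuous fun p : ℝ × ℝ => gaussianSmoothing f p.1 p.2 := by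
  refine continuous_iff_continuousAt.2 fun q => continuousAt_of_dist_le ?_ (by simp [hα0.ne'])
    fun p => abs_gaussianSmoothing_sub_le hα0 hα1 hf p.1 q.1 p.2 q.2
  fun_prop (disch := exact Or.inr hα0.le)

lemma exists_holder_bound_gaussianSmoothing_sqrt {ν : ℝ} (hν : 0 ≤ ν) (hα0 : 0 < α)
    (hα1 : α ≤ 1) (hf : ∀ x y, |f x - f y| ≤ C * |x - y| ^ α) :
    ∃ K : ℝ, ∀ s ≥ (0:ℝ), ∀ t ≥ (0:ℝ), ∀ x y : ℝ,
      |gaussianSmoothing f √(ν * t) x - gaussianSmoothing f √(ν * s) x| ≤ K * |t - s| ^ (α / 2)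
      ∧ |gaussianSmoothing f √(ν * t) x - gaussianSmoothing f √(ν * t) y| ≤ K * |x - y| ^ α := by
  set E := ∫ z, |z| ^ α ∂gaussianReal 0 1
  have hC : 0 ≤ C := nonneg_of_abs_sub_le_mul_rpow hf
  have hE : 0 ≤ E := integral_nonneg fun z => by positivity
  refine ⟨C + C * E * ν ^ (α / 2), fun s hs t ht x y => ⟨?_, ?_⟩⟩
  · calc _ ≤ C * E * |√(ν * t) - √(ν * s)| ^ α := by
          simpa [hα0.ne'] using abs_gaussianSmoothing_sub_le hα0 hα1 hf _ _ x x
      _ ≤ C * E * (ν ^ (α / 2) * |t - s| ^ (α / 2)) := by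
          gcongr; exact abs_sqrt_mul_sub_sqrt_mul_rpow_le hν hs ht hα0.le
      _ ≤ (C + C * E * ν ^ (α / 2)) * |t - s| ^ (α / 2) := by
          nlinarith [rpow_nonneg (abs_nonneg (t - s)) (α / 2)]
  · calc _ ≤ C * |x - y| ^ α := by
          simpa [hα0.ne'] using abs_gaussianSmoothing_sub_le hα0 hα1 hf √(ν * t) √(ν * t) x y
      _ ≤ (C + C * E * ν ^ (α / 2)) * |x - y| ^ α := by
          have : 0 ≤ C * E * ν ^ (α / 2) := by positivity
          nlinarith [rpow_nonneg (abs_nonneg (x - y)) α]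

end HolderContinuous

theorem J0_Holder_regularity_general (ν : ℝ) (hν : 0 < ν) (α : ℝ) (hα0 : 0 < α) (hα1 : α ≤ 1)
    (μ : ℝ → ℝ)
    (hHolder : ∃ Cα : ℝ, ∀ x y : ℝ, |μ x - μ y| ≤ Cα * |x - y|^α)
    (J : ℝ → ℝ → ℝ)
    (hJpos : ∀ t > (0:ℝ), ∀ x : ℝ, J t x = ∫ y : ℝ, G ν t (x - y) * μ y)
    (hJ0 : ∀ x : ℝ, J 0 x = μ x) :
    (∃ C : ℝ, ∀ s ≥ (0:ℝ), ∀ t ≥ (0:ℝ), ∀ x y : ℝ,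
      |J t x - J s x| ≤ C * |t - s|^(α/2) ∧ |J t x - J t y| ≤ C * |x - y|^α) ∧
    ContinuousOn (fun p : ℝ × ℝ => J p.1 p.2) (Set.Ici 0 ×ˢ Set.univ) := by
  obtain ⟨C, hC⟩ := hHolder
  have hJ : ∀ t ≥ (0:ℝ), ∀ x, J t x = gaussianSmoothing μ √(ν * t) x := by
    intro t ht x
    rcases ht.lt_or_eq with ht | rfl
    · exact (hJpos t ht x).trans (integral_heatKernel_mul_eq_gaussianSmoothing hν ht μ x)
    · simp [hJ0]
  refine ⟨?_, ?_⟩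
  · obtain ⟨K, hK⟩ := exists_holder_bound_gaussianSmoothing_sqrt hν.le hα0 hα1 hC
    exact ⟨K, fun s hs t ht x y => by simpa only [hJ t ht, hJ s hs] using hK s hs t ht x y⟩
  · have hsqrt : Continuous fun p : ℝ × ℝ => (√(ν * p.1), p.2) := by fun_prop
    exact ((continuous_gaussianSmoothing hα0 hα1 hC).comp hsqrt).continuousOn.congr
      fun p hp => hJ p.1 hp.1 p.2

theorem J0_Holder_regularity (ν : ℝ) (hν : 0 < ν) (α : ℝ) (hα0 : 0 < α) (hα1 : α ≤ 1)
    (μ : ℝ → ℝ) (hbdd : ∃ M : ℝ, ∀ x, |μ x| ≤ M)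
    (hHolder : ∃ Cα : ℝ, ∀ x y : ℝ, |μ x - μ y| ≤ Cα * |x - y|^α)
    (J : ℝ → ℝ → ℝ)
    (hJpos : ∀ t > (0:ℝ), ∀ x : ℝ, J t x = ∫ y : ℝ, G ν t (x - y) * μ y)
    (hJ0 : ∀ x : ℝ, J 0 x = μ x) :
    (∃ C : ℝ, ∀ s ≥ (0:ℝ), ∀ t ≥ (0:ℝ), ∀ x y : ℝ,
      |J t x - J s x| ≤ C * |t - s|^(α/2) ∧ |J t x - J t y| ≤ C * |x - y|^α) ∧
    ContinuousOn (fun p : ℝ × ℝ => J p.1 p.2) (Set.Ici 0 ×ˢ Set.univ) :=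
  J0_Holder_regularity_general ν hν α hα0 hα1 μ hHolder J hJpos hJ0
end

section
/- Let ν > 0, λ ≠ 0, and K(t,x) := G_{ν/2}(t,x)( λ²/√(4πνt) + (λ⁴/(2ν)) e^{λ⁴t/(4ν)} Φ(λ²√(t/(2ν))) ). Then for every t > 0 and x ∈ ℝ, λ²(G_ν² ⋆ K)(t,x) = K(t,x) − λ²G_ν(t,x)², and consequently (2G_ν² ⋆ K)(t,x) ≤ (2/λ²) K(t,x). -/
open MeasureTheory Real Set Filter

noncomputable def kk (x : ℝ) : ℝ := (Real.sqrt x)⁻¹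

lemma kk_eq_rpow (x : ℝ) : kk x = x ^ (-(1/2) : ℝ) := by
  unfold kk
  rcases lt_trichotomy x 0 with h | h | h
  · rw [Real.sqrt_eq_zero_of_nonpos h.le, Real.rpow_def_of_neg h]
    rw [show (-(1/2) : ℝ) * π = -(π/2) by ring, Real.cos_neg, Real.cos_pi_div_two]
    simp
  · simp [h]
  · rw [Real.sqrt_eq_rpow, ← Real.rpow_neg_one, ← Real.rpow_mul h.le]
    norm_num

lemma kk_nonneg (x : ℝ) : 0 ≤ kk x := by
  unfold kk; positivity

lemma kk_zero_of_nonpos {x : ℝ} (h : x ≤ 0) : kk x = 0 := by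
  unfold kk; rw [Real.sqrt_eq_zero_of_nonpos h]; simp

lemma kk_intervalIntegrable (a b : ℝ) : IntervalIntegrable kk volume a b := by
  have := intervalIntegral.intervalIntegrable_rpow' (a := a) (b := b) (r := -(1/2)) (by norm_num)
  exact this.congr (fun x _ => (kk_eq_rpow x).symm)

lemma kk_comp_sub_intervalIntegrable (c a b : ℝ) :
    IntervalIntegrable (fun x => kk (c - x)) volume a b := by
  have h := (kk_intervalIntegrable (c - a) (c - b)).comp_sub_left c
  simpa using h

lemma measurable_kk : Measurable kk :=
  (Real.continuous_sqrt.measurable).inv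

lemma kk_integral {c : ℝ} (hc : 0 ≤ c) : ∫ x in (0:ℝ)..c, kk x = 2 * Real.sqrt c := by
  have h1 : ∫ x in (0:ℝ)..c, kk x = ∫ x in (0:ℝ)..c, x ^ (-(1/2):ℝ) :=
    intervalIntegral.integral_congr (fun x _ => kk_eq_rpow x)
  rw [h1, integral_rpow (Or.inl (by norm_num))]
  norm_num
  rw [← Real.sqrt_eq_rpow]
  ring

lemma kk_le_kk {x y : ℝ} (hx : 0 < x) (hxy : x ≤ y) : kk y ≤ kk x :=
  inv_anti₀ (Real.sqrt_pos.2 hx) (Real.sqrt_le_sqrt hxy)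



lemma gauss_integrable : Integrable (fun y : ℝ => Real.exp (-y^2/2)) volume := by
  have := integrable_exp_neg_mul_sq (b := (1/2:ℝ)) (by norm_num)
  exact this.congr (by filter_upwards with x; ring_nf)

lemma gauss_total : ∫ y : ℝ, Real.exp (-y^2/2) = Real.sqrt (2*Real.pi) := by
  have := integral_gaussian (1/2:ℝ)
  rw [show ((π:ℝ)/(1/2)) = 2*π by ring] at this
  rw [← this]
  congr 1; funext y; ring_nf

lemma gauss_Iic0 : ∫ y in Set.Iic (0:ℝ), Real.exp (-y^2/2) = Real.sqrt (2*Real.pi) / 2 := by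
  have hc := MeasureTheory.integral_add_compl (measurableSet_Iic (a := (0:ℝ))) gauss_integrable
  rw [Set.compl_Iic] at hc
  have hIoi : ∫ y in Set.Ioi (0:ℝ), Real.exp (-y^2/2) = Real.sqrt (2*Real.pi) / 2 := by
    have := integral_gaussian_Ioi (1/2:ℝ)
    rw [show ((π:ℝ)/(1/2)) = 2*π by ring] at this
    rw [← this]
    congr 1; funext y; ring_nf
  have := gauss_total
  linarith [hc, hIoi, this]

lemma Phi_eq {x : ℝ} (hx : 0 ≤ x) :
    Phi x = 1/2 + (Real.sqrt (2*Real.pi))⁻¹ * ∫ u in (0:ℝ)..x, Real.exp (-u^2/2) := by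
  unfold Phi
  rw [MeasureTheory.integral_div]
  have hsplit : Set.Iic x = Set.Iic (0:ℝ) ∪ Set.Ioc 0 x := (Set.Iic_union_Ioc_eq_Iic hx).symm
  rw [hsplit, MeasureTheory.setIntegral_union (Set.Iic_disjoint_Ioc le_rfl) measurableSet_Ioc
    (gauss_integrable.integrableOn) (gauss_integrable.integrableOn)]
  rw [gauss_Iic0, ← intervalIntegral.integral_of_le hx]
  have h2π : (0:ℝ) < Real.sqrt (2*Real.pi) := Real.sqrt_pos.2 (by positivity)
  field_simp

lemma Phi_nonneg (x : ℝ) : 0 ≤ Phi x := by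
  unfold Phi
  apply MeasureTheory.integral_nonneg
  intro y; positivity

lemma Phi_le_one (x : ℝ) : Phi x ≤ 1 := by
  unfold Phi
  have h1 : ∫ y in Set.Iic x, Real.exp (-y^2/2) / Real.sqrt (2*Real.pi)
      ≤ ∫ y : ℝ, Real.exp (-y^2/2) / Real.sqrt (2*Real.pi) := by
    apply MeasureTheory.setIntegral_le_integral (gauss_integrable.div_const _)
    filter_upwards with y; positivity
  have h2 : ∫ y : ℝ, Real.exp (-y^2/2) / Real.sqrt (2*Real.pi) = 1 := by
    rw [MeasureTheory.integral_div, gauss_total]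
    have : (0:ℝ) < Real.sqrt (2*Real.pi) := Real.sqrt_pos.2 (by positivity)
    field_simp
  linarith

lemma Phi_monotone : Monotone Phi := by
  intro x y hxy
  unfold Phi
  apply MeasureTheory.setIntegral_mono_set ((gauss_integrable.div_const _).integrableOn)
  · filter_upwards with y; positivity
  · exact HasSubset.Subset.eventuallyLE (Set.Iic_subset_Iic.2 hxy)

lemma measurable_Phi : Measurable Phi := Phi_monotone.measurable

section Part3
variable {a t u : ℝ}

lemma erf_subst (ha : 0 < a) (ht : 0 ≤ t) :
    ∫ s in (0:ℝ)..t, Real.exp (-(a^2)*s) * kk s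
      = (2/a) * ∫ v in (0:ℝ)..(a * Real.sqrt t), Real.exp (-v^2) := by
  set Q : ℝ → ℝ := fun c => ∫ v in (0:ℝ)..c, Real.exp (-v^2) with hQ
  have hcontexp : Continuous (fun v : ℝ => Real.exp (-v^2)) := by continuity
  have hQcont : Continuous Q :=
    intervalIntegral.continuous_primitive (fun a b => hcontexp.intervalIntegrable a b) 0
  set A : ℝ → ℝ := fun s => (2/a) * Q (a * Real.sqrt s) with hA
  have hAcont : ContinuousOn A (Set.Icc 0 t) :=
    (continuous_const.mul (hQcont.comp (continuous_const.mul Real.continuous_sqrt))).continuousOn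
  have hderiv : ∀ s ∈ Set.Ioo 0 t, HasDerivWithinAt A (Real.exp (-(a^2)*s) * kk s) (Set.Ioi s) s := by
    intro s hs
    have hs0 : 0 < s := hs.1
    have hQd : HasDerivAt Q (Real.exp (-(a * Real.sqrt s)^2)) (a * Real.sqrt s) :=
      intervalIntegral.integral_hasDerivAt_right (hcontexp.intervalIntegrable _ _)
        (hcontexp.stronglyMeasurableAtFilter _ _) hcontexp.continuousAt
    have hsq : HasDerivAt (fun s : ℝ => a * Real.sqrt s) (a * (1 / (2 * Real.sqrt s))) s :=
      (Real.hasDerivAt_sqrt hs0.ne').const_mul a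
    have hcomp := (hQd.comp s hsq).const_mul (2/a)
    have heq : (2/a) * (Real.exp (-(a * Real.sqrt s)^2) * (a * (1 / (2 * Real.sqrt s))))
        = Real.exp (-(a^2)*s) * kk s := by
      have h1 : (a * Real.sqrt s)^2 = a^2 * s := by
        rw [mul_pow, Real.sq_sqrt hs0.le]
      rw [h1]
      unfold kk
      have hss : (0:ℝ) < Real.sqrt s := Real.sqrt_pos.2 hs0
      field_simp
    rw [heq] at hcomp
    exact hcomp.hasDerivWithinAt
  have hint : IntervalIntegrable (fun s => Real.exp (-(a^2)*s) * kk s) MeasureTheory.volume 0 t := by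
    apply (kk_intervalIntegrable 0 t).mono_fun
    · exact ((Real.measurable_exp.comp (measurable_const.mul measurable_id)).mul
        measurable_kk).aestronglyMeasurable
    · filter_upwards [MeasureTheory.ae_restrict_mem measurableSet_uIoc] with s hsmem
      rw [Set.uIoc_of_le ht] at hsmem
      have h1 : Real.exp (-(a^2)*s) ≤ 1 := by
        rw [Real.exp_le_one_iff]
        nlinarith [hsmem.1, sq_nonneg a]
      rw [Real.norm_eq_abs, Real.norm_eq_abs, abs_mul, abs_of_nonneg (kk_nonneg s),
        abs_of_nonneg (Real.exp_nonneg _)]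
      nlinarith [kk_nonneg s, Real.exp_nonneg (-(a^2)*s)]
  have := intervalIntegral.integral_eq_sub_of_hasDeriv_right_of_le ht hAcont hderiv hint
  rw [this, hA]
  simp [hQ]

end Part3

section Beta
variable {u t r : ℝ}

lemma beta_II (hu : 0 < u) :
    IntervalIntegrable (fun σ => kk σ * kk (u - σ)) MeasureTheory.volume 0 u := by
  have hmeas : MeasureTheory.AEStronglyMeasurable (fun σ => kk σ * kk (u - σ))
      (MeasureTheory.volume.restrict (Set.uIoc (0:ℝ) (u/2))) :=
    ((measurable_kk.comp measurable_id).mul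
      (measurable_kk.comp (measurable_const.sub measurable_id))).aestronglyMeasurable
  have hmeas2 : MeasureTheory.AEStronglyMeasurable (fun σ => kk σ * kk (u - σ))
      (MeasureTheory.volume.restrict (Set.uIoc (u/2) u)) :=
    ((measurable_kk.comp measurable_id).mul
      (measurable_kk.comp (measurable_const.sub measurable_id))).aestronglyMeasurable
  have J1 : IntervalIntegrable (fun σ => kk σ * kk (u - σ)) MeasureTheory.volume 0 (u/2) := by
    apply ((kk_intervalIntegrable 0 (u/2)).const_mul (kk (u/2))).mono_fun hmeas
    filter_upwards [MeasureTheory.ae_restrict_mem measurableSet_uIoc] with σ hσ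
    rw [Set.uIoc_of_le (by linarith)] at hσ
    have h1 : kk (u - σ) ≤ kk (u/2) := kk_le_kk (by linarith) (by linarith [hσ.2])
    rw [Real.norm_eq_abs, Real.norm_eq_abs,
      abs_of_nonneg (mul_nonneg (kk_nonneg _) (kk_nonneg _)),
      abs_of_nonneg (mul_nonneg (kk_nonneg _) (kk_nonneg _))]
    nlinarith [kk_nonneg σ, kk_nonneg (u - σ), kk_nonneg (u/2)]
  have J2 : IntervalIntegrable (fun σ => kk σ * kk (u - σ)) MeasureTheory.volume (u/2) u := by
    apply ((kk_comp_sub_intervalIntegrable u (u/2) u).const_mul (kk (u/2))).mono_fun hmeas2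
    filter_upwards [MeasureTheory.ae_restrict_mem measurableSet_uIoc] with σ hσ
    rw [Set.uIoc_of_le (by linarith)] at hσ
    have h1 : kk σ ≤ kk (u/2) := kk_le_kk (by linarith) hσ.1.le
    rw [Real.norm_eq_abs, Real.norm_eq_abs,
      abs_of_nonneg (mul_nonneg (kk_nonneg _) (kk_nonneg _)),
      abs_of_nonneg (mul_nonneg (kk_nonneg _) (kk_nonneg _))]
    nlinarith [kk_nonneg σ, kk_nonneg (u - σ), kk_nonneg (u/2)]
  exact J1.trans J2

lemma beta_integral (hu : 0 < u) :
    ∫ σ in (0:ℝ)..u, kk σ * kk (u - σ) = Real.pi := by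
  set B : ℝ → ℝ := fun σ => Real.arcsin (2*σ/u - 1) with hB
  have hBcont : ContinuousOn B (Set.Icc 0 u) :=
    (Real.continuous_arcsin.comp (by continuity)).continuousOn
  have hderiv : ∀ σ ∈ Set.Ioo 0 u, HasDerivWithinAt B (kk σ * kk (u - σ)) (Set.Ioi σ) σ := by
    intro σ hσ
    have h1 : HasDerivAt (fun σ : ℝ => 2*σ/u - 1) (2/u) σ := by
      have := (((hasDerivAt_id σ).const_mul (2:ℝ)).div_const u).sub_const 1
      simpa using this
    have hne1 : 2*σ/u - 1 ≠ -1 := by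
      have : 0 < 2*σ/u := div_pos (by linarith [hσ.1]) hu
      linarith
    have hne2 : 2*σ/u - 1 ≠ 1 := by
      have : 2*σ/u < 2 := by
        rw [div_lt_iff₀ hu]; linarith [hσ.2]
      linarith
    have h2 := Real.hasDerivAt_arcsin hne1 hne2
    have hcomp := h2.comp σ h1
    have heq : 1 / Real.sqrt (1 - (2*σ/u - 1)^2) * (2/u) = kk σ * kk (u - σ) := by
      have hval : 1 - (2*σ/u - 1)^2 = (2/u)^2 * (σ * (u - σ)) := by
        field_simp; ring
      rw [hval, Real.sqrt_mul (sq_nonneg _), Real.sqrt_sq (by positivity),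
        Real.sqrt_mul hσ.1.le]
      unfold kk
      have h3 : (0:ℝ) < Real.sqrt σ := Real.sqrt_pos.2 hσ.1
      have h4 : (0:ℝ) < Real.sqrt (u - σ) := Real.sqrt_pos.2 (by linarith [hσ.2])
      field_simp
    rw [heq] at hcomp
    exact hcomp.hasDerivWithinAt
  have := intervalIntegral.integral_eq_sub_of_hasDeriv_right_of_le hu.le hBcont hderiv (beta_II hu)
  rw [this, hB]
  have h5 : 2*u/u - 1 = 1 := by
    rw [mul_div_assoc, div_self hu.ne']; norm_num
  have h6 : 2*(0:ℝ)/u - 1 = -1 := by simp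
  simp only [h5, h6, Real.arcsin_one, Real.arcsin_neg_one]
  ring

lemma beta_shift_II (hrt : r < t) :
    IntervalIntegrable (fun s => kk (t - s) * kk (s - r)) MeasureTheory.volume r t := by
  have h0 : IntervalIntegrable (fun x => kk ((t - r) - x) * kk x) MeasureTheory.volume 0 (t - r) :=
    (beta_II (by linarith)).congr (fun x _ => mul_comm _ _)
  have h1 := h0.comp_sub_right r
  simp only [zero_add, sub_add_cancel] at h1
  apply h1.congr
  intro s _
  show kk (t - r - (s - r)) * kk (s - r) = kk (t - s) * kk (s - r)
  congr 2
  ring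

lemma beta_shift (hrt : r < t) :
    ∫ s in r..t, kk (t - s) * kk (s - r) = Real.pi := by
  have h := intervalIntegral.integral_comp_add_left (a := 0) (b := t - r)
    (fun s => kk (t - s) * kk (s - r)) r
  simp only [add_zero, add_sub_cancel] at h
  rw [← h]
  rw [← beta_integral (u := t - r) (by linarith)]
  apply intervalIntegral.integral_congr
  intro σ _
  show kk (t - (r + σ)) * kk (r + σ - r) = kk σ * kk (t - r - σ)
  rw [mul_comm]
  congr 2 <;> ring

end Beta

section Part4

noncomputable def Efun (a s : ℝ) : ℝ :=
  Real.exp (a^2*s) * ∫ r in (0:ℝ)..s, Real.exp (-(a^2)*r) * kk r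

lemma gauss2_II (a c d : ℝ) :
    IntervalIntegrable (fun r => Real.exp (-(a^2)*r) * kk r) MeasureTheory.volume c d := by
  set C : ℝ := Real.exp (a^2*(|c|+|d|)) with hC
  apply ((kk_intervalIntegrable c d).const_mul C).mono_fun
  · exact ((Real.measurable_exp.comp (measurable_const.mul measurable_id)).mul
      measurable_kk).aestronglyMeasurable
  · filter_upwards [MeasureTheory.ae_restrict_mem measurableSet_uIoc] with r hr
    have hr1 : min c d ≤ r := le_of_lt hr.1
    have hbound : Real.exp (-(a^2)*r) ≤ C := by
      rw [hC, Real.exp_le_exp]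
      have h1 : -(|c|+|d|) ≤ min c d := by
        have := abs_nonneg c; have := abs_nonneg d
        rcases le_total c d with h | h
        · rw [min_eq_left h]; have := neg_abs_le c; linarith
        · rw [min_eq_right h]; have := neg_abs_le d; linarith
      nlinarith [sq_nonneg a]
    have hCpos : (0:ℝ) < C := Real.exp_pos _
    rw [Real.norm_eq_abs, Real.norm_eq_abs,
      abs_of_nonneg (mul_nonneg (Real.exp_nonneg _) (kk_nonneg _)),
      abs_of_nonneg (mul_nonneg hCpos.le (kk_nonneg _))]
    exact mul_le_mul_of_nonneg_right hbound (kk_nonneg _)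

lemma Efun_continuous (a : ℝ) : Continuous (Efun a) := by
  unfold Efun
  exact (Real.continuous_exp.comp (continuous_const.mul continuous_id)).mul
    (intervalIntegral.continuous_primitive (fun c d => gauss2_II a c d) 0)

lemma F_formula {a : ℝ} (ha : 0 < a) {s : ℝ} (hs : 0 ≤ s) :
    Real.exp (a^2*s) * Phi (a * Real.sqrt (2*s))
      = (1/2)*Real.exp (a^2*s) + (a/(2*Real.sqrt Real.pi)) * Efun a s := by
  have hPhi := Phi_eq (x := a * Real.sqrt (2*s)) (by positivity)
  have hsub1 : ∫ u in (0:ℝ)..(a * Real.sqrt (2*s)), Real.exp (-u^2/2)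
      = Real.sqrt 2 * ∫ v in (0:ℝ)..(a * Real.sqrt s), Real.exp (-v^2) := by
    have h := intervalIntegral.integral_comp_mul_left (a := 0) (b := a * Real.sqrt s)
      (fun u => Real.exp (-u^2/2)) (c := Real.sqrt 2)
      (ne_of_gt (Real.sqrt_pos.2 (by norm_num)))
    have h2 : ∀ x : ℝ, Real.exp (-(Real.sqrt 2 * x)^2/2) = Real.exp (-x^2) := by
      intro x
      rw [mul_pow, Real.sq_sqrt (by norm_num : (0:ℝ) ≤ 2)]
      ring_nf
    rw [intervalIntegral.integral_congr (g := fun x => Real.exp (-x^2))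
      (fun x _ => h2 x)] at h
    rw [mul_zero] at h
    have h3 : Real.sqrt 2 * (a * Real.sqrt s) = a * Real.sqrt (2*s) := by
      rw [Real.sqrt_mul (by norm_num : (0:ℝ) ≤ 2)]; ring
    rw [h3] at h
    rw [h, smul_eq_mul, ← mul_assoc, mul_inv_cancel₀ (by positivity : (Real.sqrt 2) ≠ 0), one_mul]
  have herf := erf_subst ha hs
  have hEfun : Efun a s = Real.exp (a^2*s) * ((2/a) * ∫ v in (0:ℝ)..(a * Real.sqrt s), Real.exp (-v^2)) := by
    unfold Efun; rw [herf]
  rw [hPhi, hsub1, hEfun]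
  have h2π : Real.sqrt (2*Real.pi) = Real.sqrt 2 * Real.sqrt Real.pi := Real.sqrt_mul (by norm_num) _
  rw [h2π]
  have hs2 : (0:ℝ) < Real.sqrt 2 := by positivity
  have hsπ : (0:ℝ) < Real.sqrt Real.pi := Real.sqrt_pos.2 Real.pi_pos
  field_simp

lemma Efun_eq {a s : ℝ} (hs : 0 ≤ s) :
    Efun a s = ∫ r in (0:ℝ)..s, Real.exp (a^2*r) * kk (s - r) := by
  unfold Efun
  rw [← intervalIntegral.integral_const_mul]
  have h1 : ∀ r, Real.exp (a^2*s) * (Real.exp (-(a^2)*r) * kk r)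
      = Real.exp (a^2*(s-r)) * kk r := by
    intro r
    rw [← mul_assoc, ← Real.exp_add]
    ring_nf
  rw [intervalIntegral.integral_congr (g := fun r => Real.exp (a^2*(s-r)) * kk r) (fun r _ => h1 r)]
  have h := intervalIntegral.integral_comp_sub_left (a := 0) (b := s)
    (fun x => Real.exp (a^2*x) * kk (s - x)) s
  simp only [sub_zero, sub_self] at h
  rw [← h]
  apply intervalIntegral.integral_congr
  intro r _
  show Real.exp (a^2*(s - r)) * kk r = Real.exp (a^2*(s - r)) * kk (s - (s - r))
  congr 2
  ring

end Part4

section Part5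

open MeasureTheory

lemma expkk_II (a s c d : ℝ) :
    IntervalIntegrable (fun r => Real.exp (a^2*r) * kk (s - r)) volume c d := by
  set C : ℝ := Real.exp (a^2*(|c|+|d|)) with hC
  apply ((kk_comp_sub_intervalIntegrable s c d).const_mul C).mono_fun
  · exact ((Real.measurable_exp.comp (measurable_const.mul measurable_id)).mul
      (measurable_kk.comp (measurable_const.sub measurable_id))).aestronglyMeasurable
  · filter_upwards [MeasureTheory.ae_restrict_mem measurableSet_uIoc] with r hr
    have hr2 : r ≤ max c d := le_of_le_of_eq hr.2 rfl
    have hbound : Real.exp (a^2*r) ≤ C := by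
      rw [hC, Real.exp_le_exp]
      have h1 : max c d ≤ |c|+|d| := by
        have := le_abs_self c; have := le_abs_self d
        have := abs_nonneg c; have := abs_nonneg d
        rcases le_total c d with h | h
        · rw [max_eq_right h]; linarith
        · rw [max_eq_left h]; linarith
      nlinarith [sq_nonneg a]
    rw [Real.norm_eq_abs, Real.norm_eq_abs,
      abs_of_nonneg (mul_nonneg (Real.exp_nonneg _) (kk_nonneg _)),
      abs_of_nonneg (mul_nonneg (Real.exp_nonneg _) (kk_nonneg _))]
    exact mul_le_mul_of_nonneg_right hbound (kk_nonneg _)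

lemma exp_integral {a : ℝ} (ha : a ≠ 0) (t : ℝ) :
    ∫ r in (0:ℝ)..t, Real.exp (a^2*r) = (Real.exp (a^2*t) - 1)/a^2 := by
  have hderiv : ∀ x ∈ Set.uIcc (0:ℝ) t,
      HasDerivAt (fun r => Real.exp (a^2*r)/a^2) (Real.exp (a^2*x)) x := by
    intro x _
    have h1 : HasDerivAt (fun r : ℝ => a^2*r) (a^2) x := by
      simpa using (hasDerivAt_id x).const_mul (a^2)
    have h2 := (Real.hasDerivAt_exp (a^2*x)).comp x h1
    have h3 := h2.div_const (a^2)
    have ha2 : a^2 ≠ 0 := pow_ne_zero 2 ha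
    rw [mul_div_assoc, div_self ha2, mul_one] at h3
    exact h3
  rw [intervalIntegral.integral_eq_sub_of_hasDerivAt hderiv
    ((Real.continuous_exp.comp (continuous_const.mul continuous_id)).intervalIntegrable 0 t)]
  simp [Real.exp_zero]
  ring

lemma T_integral {a t : ℝ} (ha : 0 < a) (ht : 0 < t) :
    ∫ s in (0:ℝ)..t, kk (t-s) * Efun a s
      = Real.pi * ((Real.exp (a^2*t) - 1)/a^2) := by
  set g : ℝ → ℝ → ℝ := fun s r => kk (t-s) * (Real.exp (a^2*r) * kk (s-r)) with hg
  have hgmeas : Measurable (fun p : ℝ × ℝ => g p.1 p.2) := by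
    apply ((measurable_kk.comp (measurable_const.sub measurable_fst)).mul _)
    exact ((Real.measurable_exp.comp (measurable_const.mul measurable_snd)).mul
      (measurable_kk.comp (measurable_fst.sub measurable_snd)))
  have hgnonneg : ∀ s r, 0 ≤ g s r := fun s r =>
    mul_nonneg (kk_nonneg _) (mul_nonneg (Real.exp_nonneg _) (kk_nonneg _))
  set μ := volume.restrict (Set.Ioc (0:ℝ) t) with hμ
  -- Step B : pointwise identity on Ioc
  have stepB : ∀ s ∈ Set.Ioc (0:ℝ) t, kk (t-s) * Efun a s = ∫ r, g s r ∂μ := by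
    intro s hs
    have hs0 : 0 < s := hs.1
    have hst : s ≤ t := hs.2
    have hzero : ∫ r in s..t, Real.exp (a^2*r) * kk (s - r) = 0 := by
      rw [intervalIntegral.integral_congr (g := fun _ => (0:ℝ))]
      · simp
      · intro r hr
        rw [Set.uIcc_of_le hst] at hr
        have : s - r ≤ 0 := by linarith [hr.1]
        simp [kk_zero_of_nonpos this]
    have hext : Efun a s = ∫ r in (0:ℝ)..t, Real.exp (a^2*r) * kk (s - r) := by
      rw [Efun_eq hs0.le,
        ← intervalIntegral.integral_add_adjacent_intervals (b := s)
          (expkk_II a s 0 s) (expkk_II a s s t), hzero, add_zero]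
    rw [hext, ← intervalIntegral.integral_const_mul,
      intervalIntegral.integral_of_le ht.le]
  -- Integrability on the product
  have hints : ∀ s : ℝ, Integrable (fun r => g s r) μ := by
    intro s
    rw [hμ]
    exact (intervalIntegrable_iff_integrableOn_Ioc_of_le ht.le).1
      ((expkk_II a s 0 t).const_mul (kk (t-s)))
  have hbound : ∀ s ∈ Set.Ioc (0:ℝ) t,
      (∫ r, ‖g s r‖ ∂μ) ≤ (Real.exp (a^2*t) * (2*Real.sqrt t)) * kk (t-s) := by
    intro s hs
    have h1 : (∫ r, ‖g s r‖ ∂μ) = kk (t-s) * ∫ r, Real.exp (a^2*r) * kk (s-r) ∂μ := by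
      rw [← integral_const_mul]
      congr 1; funext r
      rw [Real.norm_eq_abs, abs_of_nonneg (hgnonneg s r)]
    rw [h1]
    have h2 : (∫ r, Real.exp (a^2*r) * kk (s-r) ∂μ) ≤ Real.exp (a^2*t) * (2*Real.sqrt t) := by
      have hle : (∫ r, Real.exp (a^2*r) * kk (s-r) ∂μ)
          ≤ ∫ r, Real.exp (a^2*t) * kk (s-r) ∂μ := by
        rw [hμ]
        apply setIntegral_mono_on
        · exact (intervalIntegrable_iff_integrableOn_Ioc_of_le ht.le).1 (expkk_II a s 0 t)
        · exact (intervalIntegrable_iff_integrableOn_Ioc_of_le ht.le).1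
            ((kk_comp_sub_intervalIntegrable s 0 t).const_mul _)
        · exact measurableSet_Ioc
        · intro r hr
          apply mul_le_mul_of_nonneg_right _ (kk_nonneg _)
          rw [Real.exp_le_exp]
          nlinarith [hr.2, sq_nonneg a]
      have heq2 : (∫ r, Real.exp (a^2*t) * kk (s-r) ∂μ)
          = Real.exp (a^2*t) * ∫ r in (0:ℝ)..t, kk (s-r) := by
        rw [hμ, ← intervalIntegral.integral_of_le ht.le, intervalIntegral.integral_const_mul]
      have heq3 : ∫ r in (0:ℝ)..t, kk (s-r) = ∫ x in (s-t)..s, kk x := by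
        simpa using intervalIntegral.integral_comp_sub_left kk s (a := 0) (b := t)
      have heq4 : ∫ x in (s-t)..(0:ℝ), kk x = 0 := by
        rw [intervalIntegral.integral_congr (g := fun _ => (0:ℝ))]
        · simp
        · intro x hx
          rw [Set.uIcc_of_le (by linarith [hs.2] : s - t ≤ 0)] at hx
          exact kk_zero_of_nonpos hx.2
      have heq5 : ∫ x in (s-t)..s, kk x = 2*Real.sqrt s := by
        rw [← intervalIntegral.integral_add_adjacent_intervals (b := (0:ℝ))
          (kk_intervalIntegrable _ _) (kk_intervalIntegrable _ _), heq4, zero_add,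
          kk_integral hs.1.le]
      calc (∫ r, Real.exp (a^2*r) * kk (s-r) ∂μ) ≤ ∫ r, Real.exp (a^2*t) * kk (s-r) ∂μ := hle
        _ = Real.exp (a^2*t) * (2*Real.sqrt s) := by rw [heq2, heq3, heq5]
        _ ≤ Real.exp (a^2*t) * (2*Real.sqrt t) := by
            have : Real.sqrt s ≤ Real.sqrt t := Real.sqrt_le_sqrt hs.2
            nlinarith [Real.exp_pos (a^2*t)]
    nlinarith [kk_nonneg (t-s), Real.exp_pos (a^2*t), Real.sqrt_nonneg t,
      mul_le_mul_of_nonneg_left h2 (kk_nonneg (t-s))]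
  have hInt : Integrable (fun p : ℝ × ℝ => g p.1 p.2) (μ.prod μ) := by
    rw [MeasureTheory.integrable_prod_iff hgmeas.aestronglyMeasurable]
    constructor
    · exact Filter.Eventually.of_forall (fun s => hints s)
    · apply Integrable.mono'
        (g := fun s => (Real.exp (a^2*t) * (2*Real.sqrt t)) * kk (t-s))
      · rw [hμ]
        exact (intervalIntegrable_iff_integrableOn_Ioc_of_le ht.le).1
          ((kk_comp_sub_intervalIntegrable t 0 t).const_mul _)
      · exact (Measurable.aestronglyMeasurable (μ := μ.prod μ) hgmeas.norm).integral_prod_right'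
      · rw [hμ]
        filter_upwards [MeasureTheory.ae_restrict_mem measurableSet_Ioc] with s hs
        rw [Real.norm_eq_abs, abs_of_nonneg (integral_nonneg (fun r => norm_nonneg _))]
        exact hbound s hs
  -- the swap
  have hswap : (∫ s, (∫ r, g s r ∂μ) ∂μ) = ∫ r, (∫ s, g s r ∂μ) ∂μ :=
    MeasureTheory.integral_integral_swap (μ := μ) (ν := μ) (f := g) (by exact hInt)
  -- Step D : compute the swapped integral
  have htne : ∀ᵐ r : ℝ, r ≠ t := by
    refine (MeasureTheory.ae_iff).2 ?_
    simpa using Real.volume_singleton (a := t)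
  have stepD : (∫ r, (∫ s, g s r ∂μ) ∂μ) = ∫ r, Real.pi * Real.exp (a^2*r) ∂μ := by
    rw [hμ]
    apply MeasureTheory.setIntegral_congr_ae measurableSet_Ioc
    filter_upwards [htne] with r hrne hrmem
    have hr0 : 0 < r := hrmem.1
    have hrt : r < t := lt_of_le_of_ne hrmem.2 hrne
    have hzero1 : ∫ s in (0:ℝ)..r, g s r = 0 := by
      rw [intervalIntegral.integral_congr (g := fun _ => (0:ℝ))]
      · simp
      · intro s hsm
        rw [Set.uIcc_of_le hr0.le] at hsm
        have : s - r ≤ 0 := by linarith [hsm.2]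
        simp [hg, kk_zero_of_nonpos this]
    have hII1 : IntervalIntegrable (fun s => g s r) volume 0 r := by
      apply (intervalIntegrable_const (c := (0:ℝ))).mono_fun
        (hgmeas.comp (measurable_id.prodMk measurable_const)).aestronglyMeasurable
      filter_upwards [MeasureTheory.ae_restrict_mem measurableSet_uIoc] with s hsm
      rw [Set.uIoc_of_le hr0.le] at hsm
      have : s - r ≤ 0 := by linarith [hsm.2]
      simp [hg, kk_zero_of_nonpos this]
    have hII2 : IntervalIntegrable (fun s => g s r) volume r t := by
      apply ((beta_shift_II hrt).const_mul (Real.exp (a^2*r))).congr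
      intro s _
      show Real.exp (a^2*r) * (kk (t-s) * kk (s-r)) = g s r
      rw [hg]; ring
    have hval2 : ∫ s in r..t, g s r = Real.pi * Real.exp (a^2*r) := by
      have h1 : ∫ s in r..t, g s r
          = Real.exp (a^2*r) * ∫ s in r..t, kk (t-s) * kk (s-r) := by
        rw [← intervalIntegral.integral_const_mul]
        apply intervalIntegral.integral_congr
        intro s _
        show g s r = Real.exp (a^2*r) * (kk (t-s) * kk (s-r))
        rw [hg]; ring
      rw [h1, beta_shift hrt]; ring
    calc ∫ s, g s r ∂μ = ∫ s in (0:ℝ)..t, g s r := by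
          rw [hμ, intervalIntegral.integral_of_le ht.le]
      _ = (∫ s in (0:ℝ)..r, g s r) + ∫ s in r..t, g s r :=
          (intervalIntegral.integral_add_adjacent_intervals hII1 hII2).symm
      _ = Real.pi * Real.exp (a^2*r) := by rw [hzero1, hval2, zero_add]
  -- assemble
  have hfinal : (∫ r, Real.pi * Real.exp (a^2*r) ∂μ) = Real.pi * ((Real.exp (a^2*t) - 1)/a^2) := by
    rw [hμ, ← intervalIntegral.integral_of_le ht.le, intervalIntegral.integral_const_mul,
      exp_integral ha.ne' t]
  rw [intervalIntegral.integral_of_le ht.le]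
  have hcongr : ∫ s in Set.Ioc (0:ℝ) t, kk (t-s) * Efun a s = ∫ s, (∫ r, g s r ∂μ) ∂μ := by
    rw [hμ]
    apply MeasureTheory.setIntegral_congr_ae measurableSet_Ioc
    filter_upwards with s hs
    exact stepB s hs
  calc ∫ s in Set.Ioc (0:ℝ) t, kk (t-s) * Efun a s
      = ∫ s, (∫ r, g s r ∂μ) ∂μ := hcongr
    _ = ∫ r, (∫ s, g s r ∂μ) ∂μ := hswap
    _ = ∫ r, Real.pi * Real.exp (a^2*r) ∂μ := stepD
    _ = Real.pi * ((Real.exp (a^2*t) - 1)/a^2) := hfinal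

end Part5

section Part6

open MeasureTheory

lemma scalar_identity {a t : ℝ} (ha : 0 < a) (ht : 0 < t) :
    (a/Real.sqrt Real.pi) * (∫ s in (0:ℝ)..t,
        ((a/Real.sqrt Real.pi) * kk s
          + 2*a^2 * (Real.exp (a^2*s) * Phi (a * Real.sqrt (2*s)))) * kk (t-s))
      = 2*a^2 * (Real.exp (a^2*t) * Phi (a * Real.sqrt (2*t))) := by
  have hFsmeas : Measurable (fun s => Real.exp (a^2*s) * Phi (a * Real.sqrt (2*s))) :=
    (Real.measurable_exp.comp (measurable_const.mul measurable_id)).mul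
      (measurable_Phi.comp ((measurable_const.mul
        (Real.continuous_sqrt.measurable.comp (measurable_const.mul measurable_id)))))
  have hkkt : IntervalIntegrable (fun s => kk (t-s)) volume 0 t :=
    kk_comp_sub_intervalIntegrable t 0 t
  have hI1 : IntervalIntegrable (fun s => kk s * kk (t-s)) volume 0 t := beta_II ht
  have hI2 : IntervalIntegrable
      (fun s => (Real.exp (a^2*s) * Phi (a * Real.sqrt (2*s))) * kk (t-s)) volume 0 t := by
    apply (hkkt.const_mul (Real.exp (a^2*t))).mono_fun
    · exact (hFsmeas.mul (measurable_kk.comp (measurable_const.sub measurable_id))).aestronglyMeasurable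
    · filter_upwards [MeasureTheory.ae_restrict_mem measurableSet_uIoc] with s hsm
      rw [Set.uIoc_of_le ht.le] at hsm
      have hF1 : 0 ≤ Real.exp (a^2*s) * Phi (a * Real.sqrt (2*s)) :=
        mul_nonneg (Real.exp_nonneg _) (Phi_nonneg _)
      have hF2 : Real.exp (a^2*s) * Phi (a * Real.sqrt (2*s)) ≤ Real.exp (a^2*t) := by
        calc Real.exp (a^2*s) * Phi (a * Real.sqrt (2*s)) ≤ Real.exp (a^2*s) * 1 :=
              mul_le_mul_of_nonneg_left (Phi_le_one _) (Real.exp_nonneg _)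
          _ ≤ Real.exp (a^2*t) := by
              rw [mul_one, Real.exp_le_exp]
              nlinarith [hsm.2, sq_nonneg a]
      rw [Real.norm_eq_abs, Real.norm_eq_abs,
        abs_of_nonneg (mul_nonneg hF1 (kk_nonneg _)),
        abs_of_nonneg (mul_nonneg (Real.exp_nonneg _) (kk_nonneg _))]
      exact mul_le_mul_of_nonneg_right hF2 (kk_nonneg _)
  have hsplit : ∫ s in (0:ℝ)..t,
      ((a/Real.sqrt Real.pi) * kk s
        + 2*a^2 * (Real.exp (a^2*s) * Phi (a * Real.sqrt (2*s)))) * kk (t-s)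
      = (a/Real.sqrt Real.pi) * (∫ s in (0:ℝ)..t, kk s * kk (t-s))
        + 2*a^2 * ∫ s in (0:ℝ)..t, (Real.exp (a^2*s) * Phi (a * Real.sqrt (2*s))) * kk (t-s) := by
    rw [← intervalIntegral.integral_const_mul, ← intervalIntegral.integral_const_mul,
      ← intervalIntegral.integral_add (hI1.const_mul _) (hI2.const_mul _)]
    apply intervalIntegral.integral_congr
    intro s _
    ring
  have hIF : ∫ s in (0:ℝ)..t, (Real.exp (a^2*s) * Phi (a * Real.sqrt (2*s))) * kk (t-s)
      = (1/2) * Efun a t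
        + (a/(2*Real.sqrt Real.pi)) * (Real.pi * ((Real.exp (a^2*t) - 1)/a^2)) := by
    have hcongr : ∫ s in (0:ℝ)..t, (Real.exp (a^2*s) * Phi (a * Real.sqrt (2*s))) * kk (t-s)
        = ∫ s in (0:ℝ)..t, ((1/2)*Real.exp (a^2*s) * kk (t-s)
            + (a/(2*Real.sqrt Real.pi)) * (kk (t-s) * Efun a s)) := by
      apply intervalIntegral.integral_congr
      intro s hsm
      rw [Set.uIcc_of_le ht.le] at hsm
      show Real.exp (a^2*s) * Phi (a * Real.sqrt (2*s)) * kk (t-s) = _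
      rw [F_formula ha hsm.1]
      ring
    rw [hcongr]
    have hII1 : IntervalIntegrable (fun s => (1/2)*Real.exp (a^2*s) * kk (t-s)) volume 0 t := by
      have := (expkk_II a t 0 t).const_mul (1/2 : ℝ)
      apply this.congr
      intro s _
      show (1/2) * (Real.exp (a^2*s) * kk (t-s)) = (1/2)*Real.exp (a^2*s) * kk (t-s)
      ring
    have hEcont : Continuous (fun s => Efun a s) := Efun_continuous a
    obtain ⟨C, hC⟩ := (isCompact_Icc (a := (0:ℝ)) (b := t)).exists_bound_of_continuousOn
      hEcont.continuousOn
    have hII2 : IntervalIntegrable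
        (fun s => (a/(2*Real.sqrt Real.pi)) * (kk (t-s) * Efun a s)) volume 0 t := by
      apply ((hkkt.const_mul ((a/(2*Real.sqrt Real.pi)) * |C|)).mono_fun)
      · exact (measurable_const.mul ((measurable_kk.comp
          (measurable_const.sub measurable_id)).mul hEcont.measurable)).aestronglyMeasurable
      · filter_upwards [MeasureTheory.ae_restrict_mem measurableSet_uIoc] with s hsm
        rw [Set.uIoc_of_le ht.le] at hsm
        have h1 : |Efun a s| ≤ |C| := by
          have := hC s (Set.mem_Icc.2 ⟨hsm.1.le, hsm.2⟩)
          rw [Real.norm_eq_abs] at this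
          exact this.trans (le_abs_self C)
        have hnn : (0:ℝ) ≤ a/(2*Real.sqrt Real.pi) := by positivity
        have h2 : |a/(2*Real.sqrt Real.pi) * (|C|)| = a/(2*Real.sqrt Real.pi) * |C| :=
          abs_of_nonneg (mul_nonneg hnn (abs_nonneg C))
        rw [Real.norm_eq_abs, Real.norm_eq_abs,
          abs_mul (a/(2*Real.sqrt Real.pi) * |C|) (kk (t-s)), h2,
          abs_of_nonneg (kk_nonneg (t-s)),
          abs_mul (a/(2*Real.sqrt Real.pi)) (kk (t-s) * Efun a s),
          abs_of_nonneg hnn, abs_mul (kk (t-s)) (Efun a s),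
          abs_of_nonneg (kk_nonneg (t-s))]
        calc a/(2*Real.sqrt Real.pi) * (kk (t-s) * |Efun a s|)
            ≤ a/(2*Real.sqrt Real.pi) * (kk (t-s) * |C|) := by
              apply mul_le_mul_of_nonneg_left _ hnn
              exact mul_le_mul_of_nonneg_left h1 (kk_nonneg _)
          _ = a/(2*Real.sqrt Real.pi) * |C| * kk (t-s) := by ring
    rw [intervalIntegral.integral_add hII1 hII2]
    have hfirst : ∫ s in (0:ℝ)..t, (1/2)*Real.exp (a^2*s) * kk (t-s) = (1/2) * Efun a t := by
      rw [Efun_eq ht.le, ← intervalIntegral.integral_const_mul]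
      apply intervalIntegral.integral_congr
      intro s _
      ring
    have hsecond : ∫ s in (0:ℝ)..t, (a/(2*Real.sqrt Real.pi)) * (kk (t-s) * Efun a s)
        = (a/(2*Real.sqrt Real.pi)) * (Real.pi * ((Real.exp (a^2*t) - 1)/a^2)) := by
      rw [intervalIntegral.integral_const_mul, T_integral ha ht]
    rw [hfirst, hsecond]
  rw [hsplit, beta_integral ht, hIF, F_formula ha ht.le]
  set sπ := Real.sqrt Real.pi with hsπ
  have hsπpos : (0:ℝ) < sπ := Real.sqrt_pos.2 Real.pi_pos
  rw [show Real.pi = sπ * sπ from (Real.mul_self_sqrt Real.pi_pos.le).symm]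
  field_simp
  ring

end Part6

section Part7

open MeasureTheory

lemma G_zero (ν x : ℝ) : G ν 0 x = 0 := by
  simp [G]

lemma sqrt_four_piv (c : ℝ) (hc : 0 ≤ c) : Real.sqrt (4*c) = 2 * Real.sqrt c := by
  rw [show (4:ℝ)*c = 2^2*c by ring, Real.sqrt_mul (by positivity), Real.sqrt_sq (by norm_num)]

lemma G_sq {ν : ℝ} (hν : 0 < ν) {τ : ℝ} (hτ : 0 ≤ τ) (z : ℝ) :
    (G ν τ z)^2 = (Real.sqrt (4*Real.pi*ν*τ))⁻¹ * G (ν/2) τ z := by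
  rcases eq_or_lt_of_le hτ with h | h
  · rw [← h, G_zero, G_zero]
    simp
  · unfold G
    have hP : (0:ℝ) < Real.pi*ν*τ := by positivity
    have h1 : (0:ℝ) < 2*Real.pi*ν*τ := by positivity
    rw [show 2*Real.pi*(ν/2)*τ = Real.pi*ν*τ by ring,
        show 2*(ν/2)*τ = ν*τ by ring,
        show 4*Real.pi*ν*τ = 4*(Real.pi*ν*τ) by ring,
        sqrt_four_piv _ hP.le]
    rw [mul_pow, inv_pow, Real.sq_sqrt h1.le, sq, ← Real.exp_add]
    rw [show -z^2/(2*ν*τ) + -z^2/(2*ν*τ) = -z^2/(ν*τ) by field_simp; ring]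
    rw [← mul_assoc, ← mul_inv]
    congr 2
    rw [mul_assoc 2 (Real.sqrt (Real.pi*ν*τ)) (Real.sqrt (Real.pi*ν*τ)),
      Real.mul_self_sqrt hP.le]
    ring

lemma chapman {p s t : ℝ} (hp : 0 < p) (hs : 0 < s) (hst : s < t) (x : ℝ) :
    ∫ y : ℝ, G p (t-s) (x-y) * G p s y = G p t x := by
  have hts : 0 < t - s := sub_pos.2 hst
  set A := 2*p*(t-s) with hA
  set B := 2*p*s with hB
  set C := 2*p*t with hC
  have hApos : 0 < A := by rw [hA]; exact mul_pos (by linarith) hts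
  have hBpos : 0 < B := by rw [hB]; exact mul_pos (by linarith) hs
  have hCpos : 0 < C := by rw [hC]; exact mul_pos (by linarith) (hs.trans hst)
  have hABC : A + B = C := by rw [hA, hB, hC]; ring
  have hpoint : ∀ y : ℝ, G p (t-s) (x-y) * G p s y
      = ((Real.sqrt (2*Real.pi*p*(t-s)))⁻¹ * (Real.sqrt (2*Real.pi*p*s))⁻¹
          * Real.exp (-x^2/C))
        * Real.exp (-(C/(A*B)) * (y - (B/C)*x)^2) := by
    intro y
    unfold G
    have hexp : Real.exp (-x^2/C) * Real.exp (-(C/(A*B)) * (y - (B/C)*x)^2)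
        = Real.exp (-(x-y)^2/A) * Real.exp (-y^2/B) := by
      rw [← Real.exp_add, ← Real.exp_add]
      congr 1
      rw [← hABC]
      have hABne : A + B ≠ 0 := ne_of_gt (by linarith)
      field_simp
      ring
    rw [show (2:ℝ)*p*(t-s) = A from rfl, show (2:ℝ)*p*s = B from rfl]
    rw [mul_mul_mul_comm, ← hexp]
    ring
  rw [MeasureTheory.integral_congr_ae (Filter.Eventually.of_forall hpoint)]
  rw [MeasureTheory.integral_const_mul]
  have hshift : ∫ y : ℝ, Real.exp (-(C/(A*B)) * (y - (B/C)*x)^2)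
      = Real.sqrt (Real.pi/(C/(A*B))) := by
    rw [← integral_gaussian (C/(A*B))]
    exact MeasureTheory.integral_sub_right_eq_self (fun y => Real.exp (-(C/(A*B)) * y^2)) _
  rw [hshift]
  unfold G
  rw [show 2*Real.pi*p*(t-s) = Real.pi*A by rw [hA]; ring,
      show 2*Real.pi*p*s = Real.pi*B by rw [hB]; ring,
      show 2*Real.pi*p*t = Real.pi*C by rw [hC]; ring,
      show -x^2/(2*p*t) = -x^2/C from rfl]
  have hcoef : (Real.sqrt (Real.pi*A))⁻¹ * (Real.sqrt (Real.pi*B))⁻¹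
      * Real.sqrt (Real.pi/(C/(A*B))) = (Real.sqrt (Real.pi*C))⁻¹ := by
    rw [show Real.pi/(C/(A*B)) = Real.pi*A*B/C by field_simp]
    rw [Real.sqrt_div (mul_nonneg (mul_nonneg Real.pi_pos.le hApos.le) hBpos.le) C,
      Real.sqrt_mul (mul_nonneg Real.pi_pos.le hApos.le) B,
      Real.sqrt_mul Real.pi_pos.le A, Real.sqrt_mul Real.pi_pos.le B,
      Real.sqrt_mul Real.pi_pos.le C]
    have h1 : (0:ℝ) < Real.sqrt Real.pi := Real.sqrt_pos.2 Real.pi_pos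
    have h2 : (0:ℝ) < Real.sqrt A := Real.sqrt_pos.2 hApos
    have h3 : (0:ℝ) < Real.sqrt B := Real.sqrt_pos.2 hBpos
    have h4 : (0:ℝ) < Real.sqrt C := Real.sqrt_pos.2 hCpos
    field_simp
  calc (Real.sqrt (Real.pi*A))⁻¹ * (Real.sqrt (Real.pi*B))⁻¹ * Real.exp (-x^2/C)
        * Real.sqrt (Real.pi/(C/(A*B)))
      = ((Real.sqrt (Real.pi*A))⁻¹ * (Real.sqrt (Real.pi*B))⁻¹
          * Real.sqrt (Real.pi/(C/(A*B)))) * Real.exp (-x^2/C) := by ring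
    _ = (Real.sqrt (Real.pi*C))⁻¹ * Real.exp (-x^2/C) := by rw [hcoef]

end Part7

section Part8

open MeasureTheory

variable {ν lam : ℝ}

lemma sqrt4pi_inv (hν : 0 < ν) (τ : ℝ) :
    (Real.sqrt (4*Real.pi*ν*τ))⁻¹ = (2*Real.sqrt (Real.pi*ν))⁻¹ * kk τ := by
  rw [show 4*Real.pi*ν*τ = (4*(Real.pi*ν))*τ by ring,
    Real.sqrt_mul (by positivity) τ,
    sqrt_four_piv _ (mul_nonneg Real.pi_pos.le hν.le), mul_inv]
  rfl

lemma fK_eq (hν : 0 < ν) (lam : ℝ) {s : ℝ} (hs : 0 ≤ s) :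
    lam^2 / Real.sqrt (4*Real.pi*ν*s)
      + lam^4/(2*ν) * Real.exp (lam^4*s/(4*ν)) * Phi (lam^2 * Real.sqrt (s/(2*ν)))
    = (lam^2/(2*Real.sqrt ν)/Real.sqrt Real.pi) * kk s
      + 2*(lam^2/(2*Real.sqrt ν))^2
        * (Real.exp ((lam^2/(2*Real.sqrt ν))^2*s)
            * Phi ((lam^2/(2*Real.sqrt ν)) * Real.sqrt (2*s))) := by
  have hsν : (0:ℝ) < Real.sqrt ν := Real.sqrt_pos.2 hν
  have hsπ : (0:ℝ) < Real.sqrt Real.pi := Real.sqrt_pos.2 Real.pi_pos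
  have hs2 : (0:ℝ) < Real.sqrt 2 := by positivity
  have h22 : Real.sqrt 2 * Real.sqrt 2 = 2 := Real.mul_self_sqrt (by norm_num)
  have hA2 : (lam^2/(2*Real.sqrt ν))^2 = lam^4/(4*ν) := by
    rw [div_pow, mul_pow, Real.sq_sqrt hν.le]
    norm_num
    ring
  have term1 : lam^2 / Real.sqrt (4*Real.pi*ν*s)
      = (lam^2/(2*Real.sqrt ν)/Real.sqrt Real.pi) * kk s := by
    rw [div_eq_mul_inv, sqrt4pi_inv hν s, Real.sqrt_mul Real.pi_pos.le ν]
    unfold kk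
    rcases eq_or_lt_of_le hs with h | h
    · rw [← h]
      simp
    · field_simp
  have targ : lam^2 * Real.sqrt (s/(2*ν)) = (lam^2/(2*Real.sqrt ν)) * Real.sqrt (2*s) := by
    rw [Real.sqrt_div hs, Real.sqrt_mul (by norm_num : (0:ℝ) ≤ 2) ν,
      Real.sqrt_mul (by norm_num : (0:ℝ) ≤ 2) s]
    field_simp
    linear_combination -(lam^2 * Real.sqrt s) * h22
  have hcoef : lam^4/(2*ν) = 2*(lam^2/(2*Real.sqrt ν))^2 := by
    rw [hA2]
    field_simp
    ring
  have hexparg : lam^4*s/(4*ν) = (lam^2/(2*Real.sqrt ν))^2*s := by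
    rw [hA2]; ring
  rw [term1, targ, hcoef, hexparg]
  ring

lemma inner_int (hν : 0 < ν) (lam x t : ℝ) {s : ℝ} (hs : 0 < s) (hst : s < t) :
    ∫ y : ℝ, (G ν (t-s) (x-y))^2 * K ν lam s y
      = G (ν/2) t x * ((Real.sqrt (4*Real.pi*ν*(t-s)))⁻¹
          * (lam^2 / Real.sqrt (4*Real.pi*ν*s)
             + lam^4/(2*ν) * Real.exp (lam^4*s/(4*ν)) * Phi (lam^2 * Real.sqrt (s/(2*ν))))) := by
  have hpoint : ∀ y : ℝ, (G ν (t-s) (x-y))^2 * K ν lam s y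
      = ((Real.sqrt (4*Real.pi*ν*(t-s)))⁻¹
          * (lam^2 / Real.sqrt (4*Real.pi*ν*s)
             + lam^4/(2*ν) * Real.exp (lam^4*s/(4*ν)) * Phi (lam^2 * Real.sqrt (s/(2*ν)))))
        * (G (ν/2) (t-s) (x-y) * G (ν/2) s y) := by
    intro y
    unfold K
    rw [G_sq hν (by linarith : (0:ℝ) ≤ t - s)]
    ring
  rw [MeasureTheory.integral_congr_ae (Filter.Eventually.of_forall hpoint),
    MeasureTheory.integral_const_mul, chapman (by linarith : 0 < ν/2) hs hst]
  ring

end Part8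

theorem K_resolvent_identity (ν lam : ℝ) (hν : 0 < ν) (hlam : lam ≠ 0)
    (t x : ℝ) (ht : 0 < t) :
    lam^2 * (∫ s in (0:ℝ)..t, ∫ y : ℝ, (G ν (t - s) (x - y))^2 * K ν lam s y)
        = K ν lam t x - lam^2 * (G ν t x)^2 ∧
    (∫ s in (0:ℝ)..t, ∫ y : ℝ, 2 * (G ν (t - s) (x - y))^2 * K ν lam s y)
        ≤ (2/lam^2) * K ν lam t x := by
  have hsν : (0:ℝ) < Real.sqrt ν := Real.sqrt_pos.2 hν
  have hsπ : (0:ℝ) < Real.sqrt Real.pi := Real.sqrt_pos.2 Real.pi_pos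
  have hlam2 : (0:ℝ) < lam^2 := lt_of_le_of_ne (sq_nonneg lam) (Ne.symm (pow_ne_zero 2 hlam))
  have hA : (0:ℝ) < lam^2/(2*Real.sqrt ν) := div_pos hlam2 (by linarith)
  set M := ∫ s in (0:ℝ)..t, ∫ y : ℝ, (G ν (t - s) (x - y))^2 * K ν lam s y with hMdef
  have hac : lam^2 * (2*Real.sqrt (Real.pi*ν))⁻¹ = (lam^2/(2*Real.sqrt ν)) / Real.sqrt Real.pi := by
    rw [Real.sqrt_mul Real.pi_pos.le ν]
    field_simp
  -- time-integrand congruence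
  have hstep : ∀ s ∈ Set.Ioc (0:ℝ) t,
      (∫ y : ℝ, (G ν (t - s) (x - y))^2 * K ν lam s y)
        = (G (ν/2) t x * (2*Real.sqrt (Real.pi*ν))⁻¹)
          * ((((lam^2/(2*Real.sqrt ν))/Real.sqrt Real.pi) * kk s
              + 2*(lam^2/(2*Real.sqrt ν))^2
                * (Real.exp ((lam^2/(2*Real.sqrt ν))^2*s)
                    * Phi ((lam^2/(2*Real.sqrt ν)) * Real.sqrt (2*s)))) * kk (t-s)) := by
    intro s hs
    rcases eq_or_lt_of_le hs.2 with h | h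
    · rw [h]
      simp [sub_self, G_zero, show kk 0 = 0 from kk_zero_of_nonpos le_rfl]
    · rw [inner_int hν lam x t hs.1 h, sqrt4pi_inv hν (t-s), fK_eq hν lam hs.1.le]
      ring
  have hM : M = (G (ν/2) t x * (2*Real.sqrt (Real.pi*ν))⁻¹)
      * ∫ s in (0:ℝ)..t, (((lam^2/(2*Real.sqrt ν))/Real.sqrt Real.pi) * kk s
          + 2*(lam^2/(2*Real.sqrt ν))^2
            * (Real.exp ((lam^2/(2*Real.sqrt ν))^2*s)
                * Phi ((lam^2/(2*Real.sqrt ν)) * Real.sqrt (2*s)))) * kk (t-s) := by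
    rw [hMdef, ← intervalIntegral.integral_const_mul]
    apply intervalIntegral.integral_congr_ae
    filter_upwards with s hsm
    rw [Set.uIoc_of_le ht.le] at hsm
    exact hstep s hsm
  have hscal := scalar_identity (a := lam^2/(2*Real.sqrt ν)) hA ht
  have hKt : K ν lam t x = G (ν/2) t x
      * (((lam^2/(2*Real.sqrt ν))/Real.sqrt Real.pi) * kk t
          + 2*(lam^2/(2*Real.sqrt ν))^2
            * (Real.exp ((lam^2/(2*Real.sqrt ν))^2*t)
                * Phi ((lam^2/(2*Real.sqrt ν)) * Real.sqrt (2*t)))) := by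
    rw [K, fK_eq hν lam ht.le]
  have hGt2 : lam^2 * (G ν t x)^2
      = G (ν/2) t x * (((lam^2/(2*Real.sqrt ν))/Real.sqrt Real.pi) * kk t) := by
    rw [G_sq hν ht.le x, sqrt4pi_inv hν t]
    linear_combination (kk t * G (ν/2) t x) * hac
  have conj1 : lam^2 * M = K ν lam t x - lam^2 * (G ν t x)^2 := by
    rw [hM, hKt, hGt2]
    linear_combination (G (ν/2) t x
        * (∫ s in (0:ℝ)..t, (((lam^2/(2*Real.sqrt ν))/Real.sqrt Real.pi) * kk s
          + 2*(lam^2/(2*Real.sqrt ν))^2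
            * (Real.exp ((lam^2/(2*Real.sqrt ν))^2*s)
                * Phi ((lam^2/(2*Real.sqrt ν)) * Real.sqrt (2*s)))) * kk (t-s))) * hac
      + (G (ν/2) t x) * hscal
  refine ⟨conj1, ?_⟩
  have hdouble : (∫ s in (0:ℝ)..t, ∫ y : ℝ, 2 * (G ν (t - s) (x - y))^2 * K ν lam s y)
      = 2 * M := by
    rw [hMdef, ← intervalIntegral.integral_const_mul]
    apply intervalIntegral.integral_congr
    intro s _
    show (∫ y : ℝ, 2 * (G ν (t - s) (x - y))^2 * K ν lam s y)
      = 2 * ∫ y : ℝ, (G ν (t - s) (x - y))^2 * K ν lam s y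
    rw [← MeasureTheory.integral_const_mul]
    congr 1
    funext y
    ring
  rw [hdouble]
  have hKeq : (2/lam^2) * K ν lam t x = 2*M + 2*(G ν t x)^2 := by
    have hK' : K ν lam t x = lam^2*M + lam^2*(G ν t x)^2 := by linarith [conj1]
    rw [hK']
    field_simp
  rw [hKeq]
  nlinarith [sq_nonneg (G ν t x)]
end
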